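/- Subject reduction for the cross reduction of λ_CL: if (C[ā u]) ∥_a D : A is well-typed with ā : ¬B, a : B, where y₁:Y₁,...,yₖ:Yₖ are the free variables of u bound in C[ā u], B' = Y₁ ∧ ... ∧ Yₖ, and b is a fresh variable with b̄ : ¬B', b : B', then the term (C[b̄ ⟨y₁,...,yₖ⟩] ∥_a D) ∥_b D[u^{b/ȳ}/a] has type A, where u^{b/ȳ} replaces each yᵢ in u by the i-th projection of b. -/

import Mathlib

/-- Propositional formulas: atoms, ⊥, implication, conjunction. -/
inductive Formula : Type where
  | atom : Nat → Formula
  | bot  : Formula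
  | imp  : Formula → Formula → Formula
  | conj : Formula → Formula → Formula
deriving DecidableEq

/-- A formula is prime if it is not a conjunction. -/
def Formula.IsPrime : Formula → Prop
  | .conj _ _ => False
  | _ => True

/-- Atomic formulas (atoms and ⊥). -/
def Formula.IsAtomic : Formula → Prop
  | .atom _ => True
  | .bot => True
  | _ => False

/-- Subformula relation. -/
inductive Subformula : Formula → Formula → Prop where
  | refl (A : Formula) : Subformula A A
  | impL : Subformula A B → Subformula A (Formula.imp B C)
  | impR : Subformula A C → Subformula A (Formula.imp B C)
  | conjL : Subformula A B → Subformula A (Formula.conj B C)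
  | conjR : Subformula A C → Subformula A (Formula.conj B C)

/-- Proper subformula: subformula and not equal. -/
def ProperSub (A B : Formula) : Prop := Subformula A B ∧ A ≠ B

/-- B is a strong subformula of A: a proper subformula of some prime
proper subformula of A. -/
def StrongSub (B A : Formula) : Prop :=
  ∃ P, Formula.IsPrime P ∧ ProperSub P A ∧ ProperSub B P

/-- `ConjList A l` : A is the conjunction of the (nonempty) list of formulas l. -/
inductive ConjList : Formula → List Formula → Prop where
  | single (A : Formula) : ConjList A [A]
  | conj : ConjList A l → ConjList B m → ConjList (Formula.conj A B) (l ++ m)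

/-- P is a prime factor of A: A is a conjunction of prime formulas among which P. -/
def PrimeFactor (P A : Formula) : Prop :=
  ∃ l, ConjList A l ∧ (∀ Q ∈ l, Formula.IsPrime Q) ∧ P ∈ l

/-- Number of symbols of a formula. -/
def Formula.size : Formula → Nat
  | .atom _ => 1
  | .bot => 1
  | .imp A B => A.size + B.size + 1
  | .conj A B => A.size + B.size + 1

/-- The canonical list of prime factors of a formula. -/
def primeFactors : Formula → List Formula
  | .conj A B => primeFactors A ++ primeFactors B
  | A => [A]
/-- λ_CL terms (de Bruijn): simply typed λ-terms plus the parallel operators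
`parC A u v` (u ∥ₐ v with communication kind A, binding channel variable 0,
of type ¬A in u and A in v) and `par u v` (u ∥ v). -/
inductive TermCL : Type where
  | var : Nat → TermCL
  | lam : Formula → TermCL → TermCL
  | app : TermCL → TermCL → TermCL
  | pair : TermCL → TermCL → TermCL
  | proj : Bool → TermCL → TermCL
  | efq : Formula → TermCL → TermCL
  | parC : Formula → TermCL → TermCL → TermCL
  | par : TermCL → TermCL → TermCL
deriving DecidableEq

def liftF (f : Nat → Nat) : Nat → Nat
  | 0 => 0
  | n+1 => f n + 1

def TermCL.rename (f : Nat → Nat) : TermCL → TermCL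
  | .var n => .var (f n)
  | .lam A t => .lam A (t.rename (liftF f))
  | .app t u => .app (t.rename f) (u.rename f)
  | .pair t u => .pair (t.rename f) (u.rename f)
  | .proj b t => .proj b (t.rename f)
  | .efq A t => .efq A (t.rename f)
  | .parC A u v => .parC A (u.rename (liftF f)) (v.rename (liftF f))
  | .par u v => .par (u.rename f) (v.rename f)

/-- Shift all free variables up by one. -/
def liftT : TermCL → TermCL := TermCL.rename Nat.succ
/-- Shift all free variables except 0 up by one. -/
def liftU1 : TermCL → TermCL := TermCL.rename (liftF Nat.succ)
/-- Swap the variables 0 and 1. -/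
def swap01 : TermCL → TermCL :=
  TermCL.rename (fun n => match n with | 0 => 1 | 1 => 0 | m => m)

/-- Substitution of `s` for variable `k` (variables above `k` shift down). -/
def TermCL.subst (k : Nat) (s : TermCL) : TermCL → TermCL
  | .var n => if n = k then s else if k < n then .var (n-1) else .var n
  | .lam A t => .lam A (TermCL.subst (k+1) (s.rename Nat.succ) t)
  | .app t u => .app (TermCL.subst k s t) (TermCL.subst k s u)
  | .pair t u => .pair (TermCL.subst k s t) (TermCL.subst k s u)
  | .proj b t => .proj b (TermCL.subst k s t)
  | .efq A t => .efq A (TermCL.subst k s t)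
  | .parC A u v => .parC A (TermCL.subst (k+1) (s.rename Nat.succ) u)
      (TermCL.subst (k+1) (s.rename Nat.succ) v)
  | .par u v => .par (TermCL.subst k s u) (TermCL.subst k s v)

def liftσ (σ : Nat → TermCL) : Nat → TermCL
  | 0 => .var 0
  | n+1 => (σ n).rename Nat.succ

/-- Simultaneous substitution. -/
def TermCL.msubst (σ : Nat → TermCL) : TermCL → TermCL
  | .var n => σ n
  | .lam A t => .lam A (TermCL.msubst (liftσ σ) t)
  | .app t u => .app (TermCL.msubst σ t) (TermCL.msubst σ u)
  | .pair t u => .pair (TermCL.msubst σ t) (TermCL.msubst σ u)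
  | .proj b t => .proj b (TermCL.msubst σ t)
  | .efq A t => .efq A (TermCL.msubst σ t)
  | .parC A u v => .parC A (TermCL.msubst (liftσ σ) u) (TermCL.msubst (liftσ σ) v)
  | .par u v => .par (TermCL.msubst σ u) (TermCL.msubst σ v)

/-- `freeInB n t = true` iff variable `n` occurs free in `t`. -/
def freeInB (n : Nat) : TermCL → Bool
  | .var m => m == n
  | .lam _ t => freeInB (n+1) t
  | .app t u => freeInB n t || freeInB n u
  | .pair t u => freeInB n t || freeInB n u
  | .proj _ t => freeInB n t
  | .efq _ t => freeInB n t
  | .parC _ u v => freeInB (n+1) u || freeInB (n+1) v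
  | .par u v => freeInB n u || freeInB n v

/-- Typing for λ_CL: intuitionistic rules, the excluded-middle rule (parC)
and contraction (par). -/
inductive TypingCL : List Formula → TermCL → Formula → Prop where
  | var : Γ[n]? = some A → TypingCL Γ (.var n) A
  | lam : TypingCL (A::Γ) t B → TypingCL Γ (.lam A t) (.imp A B)
  | app : TypingCL Γ t (.imp A B) → TypingCL Γ u A → TypingCL Γ (.app t u) B
  | pair : TypingCL Γ t A → TypingCL Γ u B → TypingCL Γ (.pair t u) (.conj A B)
  | projL : TypingCL Γ t (.conj A B) → TypingCL Γ (.proj false t) A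
  | projR : TypingCL Γ t (.conj A B) → TypingCL Γ (.proj true t) B
  | efq : P.IsAtomic → P ≠ .bot → TypingCL Γ t .bot → TypingCL Γ (.efq P t) P
  | parC : TypingCL (.imp A .bot :: Γ) u C → TypingCL (A :: Γ) v C →
      TypingCL Γ (.parC A u v) C
  | par : TypingCL Γ u A → TypingCL Γ v A → TypingCL Γ (.par u v) A

/-- Terms without parallel operators, i.e. simply typed λ-terms. -/
def NoPar : TermCL → Prop
  | .var _ => True
  | .lam _ t => NoPar t
  | .app t u => NoPar t ∧ NoPar u
  | .pair t u => NoPar t ∧ NoPar u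
  | .proj _ t => NoPar t
  | .efq _ t => NoPar t
  | .parC _ _ _ => False
  | .par _ _ => False

/-- Simple parallel terms: parallel compositions (by ∥) of simply typed λ-terms. -/
inductive SimpleParallel : TermCL → Prop where
  | base : NoPar t → SimpleParallel t
  | par : SimpleParallel u → SimpleParallel v → SimpleParallel (.par u v)

/-- Parallel forms: parallel compositions (by ∥ₐ and ∥) of simply typed λ-terms. -/
inductive ParallelForm : TermCL → Prop where
  | base : NoPar t → ParallelForm t
  | parC : ParallelForm u → ParallelForm v → ParallelForm (.parC A u v)
  | par : ParallelForm u → ParallelForm v → ParallelForm (.par u v)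

/-- One-hole contexts. -/
inductive Ctx : Type where
  | hole : Ctx
  | lam : Formula → Ctx → Ctx
  | appL : Ctx → TermCL → Ctx
  | appR : TermCL → Ctx → Ctx
  | pairL : Ctx → TermCL → Ctx
  | pairR : TermCL → Ctx → Ctx
  | proj : Bool → Ctx → Ctx
  | efq : Formula → Ctx → Ctx
  | parCL : Formula → Ctx → TermCL → Ctx
  | parCR : Formula → TermCL → Ctx → Ctx
  | parL : Ctx → TermCL → Ctx
  | parR : TermCL → Ctx → Ctx

def Ctx.fill : Ctx → TermCL → TermCL
  | .hole, t => t
  | .lam A c, t => .lam A (c.fill t)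
  | .appL c u, t => .app (c.fill t) u
  | .appR u c, t => .app u (c.fill t)
  | .pairL c u, t => .pair (c.fill t) u
  | .pairR u c, t => .pair u (c.fill t)
  | .proj b c, t => .proj b (c.fill t)
  | .efq A c, t => .efq A (c.fill t)
  | .parCL A c u, t => .parC A (c.fill t) u
  | .parCR A u c, t => .parC A u (c.fill t)
  | .parL c u, t => .par (c.fill t) u
  | .parR u c, t => .par u (c.fill t)

/-- Types of the binders crossed by the hole, innermost first. -/
def Ctx.ext : Ctx → List Formula
  | .hole => []
  | .lam A c => c.ext ++ [A]
  | .appL c _ => c.ext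
  | .appR _ c => c.ext
  | .pairL c _ => c.ext
  | .pairR _ c => c.ext
  | .proj _ c => c.ext
  | .efq _ c => c.ext
  | .parCL A c _ => c.ext ++ [Formula.imp A .bot]
  | .parCR A _ c => c.ext ++ [A]
  | .parL c _ => c.ext
  | .parR _ c => c.ext

/-- Number of binders above the hole. -/
def Ctx.depth (c : Ctx) : Nat := c.ext.length

def Ctx.rename (f : Nat → Nat) : Ctx → Ctx
  | .hole => .hole
  | .lam A c => .lam A (c.rename (liftF f))
  | .appL c u => .appL (c.rename f) (u.rename f)
  | .appR u c => .appR (u.rename f) (c.rename f)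
  | .pairL c u => .pairL (c.rename f) (u.rename f)
  | .pairR u c => .pairR (u.rename f) (c.rename f)
  | .proj b c => .proj b (c.rename f)
  | .efq A c => .efq A (c.rename f)
  | .parCL A c u => .parCL A (c.rename (liftF f)) (u.rename (liftF f))
  | .parCR A u c => .parCR A (u.rename (liftF f)) (c.rename (liftF f))
  | .parL c u => .parL (c.rename f) (u.rename f)
  | .parR u c => .parR (u.rename f) (c.rename f)

/-- The variable `a` does not occur (free) to the right of the hole. -/
def NoVarRight (a : Nat) : Ctx → Prop
  | .hole => True
  | .lam _ c => NoVarRight (a+1) c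
  | .appL c t => NoVarRight a c ∧ freeInB a t = false
  | .appR _ c => NoVarRight a c
  | .pairL c t => NoVarRight a c ∧ freeInB a t = false
  | .pairR _ c => NoVarRight a c
  | .proj _ c => NoVarRight a c
  | .efq _ c => NoVarRight a c
  | .parCL _ c t => NoVarRight (a+1) c ∧ freeInB (a+1) t = false
  | .parCR _ _ c => NoVarRight (a+1) c
  | .parL c t => NoVarRight a c ∧ freeInB a t = false
  | .parR _ c => NoVarRight a c

open Classical in
/-- Communication complexity: total number of symbols of the prime factors of
the communication kind `B` that are neither proper subformulas of the term's
type `A` nor strong subformulas of the types `fvs` of its free variables. -/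
noncomputable def commComplexity (fvs : List Formula) (A B : Formula) : Nat :=
  ((primeFactors B).filter fun P =>
      decide (¬ (ProperSub P A ∨ ∃ Ai ∈ fvs, StrongSub P Ai))).foldr
    (fun P n => P.size + n) 0

/-- The types of the free variables of `t` in context `Γ`. -/
def freeTypes (Γ : List Formula) (t : TermCL) : List Formula :=
  (List.range Γ.length).filterMap fun n => if freeInB n t then Γ[n]? else none

/-- Iterated pairs ⟨t₁,...,tₙ⟩. -/
def tupleTerm : List TermCL → TermCL
  | [] => .var 0
  | [t] => t
  | t :: l => .pair t (tupleTerm l)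

/-- Iterated conjunctions Y₁ ∧ (Y₂ ∧ ... ∧ Yₙ). -/
def tupleType : List Formula → Formula
  | [] => .bot
  | [A] => A
  | A :: l => .conj A (tupleType l)

/-- The i-th projection of a tuple of length `len`. -/
def projSel (i len : Nat) (t : TermCL) : TermCL :=
  if i + 1 = len then (TermCL.proj true)^[i] t
  else .proj false ((TermCL.proj true)^[i] t)

/-- The multiple substitution `u^{b/ȳ}` (with `b` the channel variable 0):
variables in `ys` (the free variables of `u` bound in the context, all < k)
are replaced by the corresponding projections of `b`, the remaining free
variables (≥ k+1, the variable k being the channel ā, absent) are readdressed. -/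
def crossσ (k : Nat) (ys : List Nat) : Nat → TermCL := fun n =>
  if n < k then projSel (List.idxOf n ys) ys.length (.var 0)
  else .var (n - k)

/-- Intuitionistic (β/projection) reduction on λ_CL terms. -/
inductive RedI : TermCL → TermCL → Prop where
  | beta : RedI (.app (.lam A t) u) (TermCL.subst 0 u t)
  | projL : RedI (.proj false (.pair t u)) t
  | projR : RedI (.proj true (.pair t u)) u
  | lam : RedI t t' → RedI (.lam A t) (.lam A t')
  | appL : RedI t t' → RedI (.app t u) (.app t' u)
  | appR : RedI u u' → RedI (.app t u) (.app t u')
  | pairL : RedI t t' → RedI (.pair t u) (.pair t' u)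
  | pairR : RedI u u' → RedI (.pair t u) (.pair t u')
  | proj : RedI t t' → RedI (.proj b t) (.proj b t')
  | efq : RedI t t' → RedI (.efq A t) (.efq A t')
  | parCL : RedI u u' → RedI (.parC A u v) (.parC A u' v)
  | parCR : RedI v v' → RedI (.parC A u v) (.parC A u v')
  | parL : RedI u u' → RedI (.par u v) (.par u' v)
  | parR : RedI v v' → RedI (.par u v) (.par u v')

/-- Normality with respect to intuitionistic reductions. -/
def IntuNormal (t : TermCL) : Prop := ∀ u, ¬ RedI t u

/-!
Write `b` for the new channel and `B'` for the conjunction of the types of the variables `ȳ`.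
The left component `C[b̄ ⟨ȳ⟩] ∥ₐ D` is typed like the redex, since `b̄ ⟨ȳ⟩ : ⊥` can replace
`ā u : ⊥` in the hole of `C`. In the right component `D[u^{b/ȳ}/a]`, the term `u^{b/ȳ}` has
type `B` in the context `b : B', Γ`: each `yᵢ` becomes the projection of `b` onto `Yᵢ`, the
channel `ā` does not occur in `u`, and the remaining free variables of `u` are those of `Γ`.
-/

def TypedRenaming (Γ Δ : List Formula) (f : Nat → Nat) : Prop :=
  ∀ n X, Γ[n]? = some X → Δ[f n]? = some X

theorem TypedRenaming.succ (Γ : List Formula) (X : Formula) :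
    TypedRenaming Γ (X :: Γ) Nat.succ :=
  fun _ _ h => h

theorem TypedRenaming.liftF {Γ Δ : List Formula} {f : Nat → Nat} (hf : TypedRenaming Γ Δ f)
    (X : Formula) : TypedRenaming (X :: Γ) (X :: Δ) (liftF f)
  | 0, _, h => h
  | n + 1, Y, h => hf n Y h

theorem TypingCL.rename {Γ Δ : List Formula} {t : TermCL} {A : Formula} {f : Nat → Nat}
    (ht : TypingCL Γ t A) (hf : TypedRenaming Γ Δ f) : TypingCL Δ (t.rename f) A := by
  induction ht generalizing Δ f with
  | var h => exact .var (hf _ _ h)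
  | lam _ ih => exact .lam (ih (hf.liftF _))
  | app _ _ ih₁ ih₂ => exact .app (ih₁ hf) (ih₂ hf)
  | pair _ _ ih₁ ih₂ => exact .pair (ih₁ hf) (ih₂ hf)
  | projL _ ih => exact .projL (ih hf)
  | projR _ ih => exact .projR (ih hf)
  | efq hP hbot _ ih => exact .efq hP hbot (ih hf)
  | parC _ _ ih₁ ih₂ => exact .parC (ih₁ (hf.liftF _)) (ih₂ (hf.liftF _))
  | par _ _ ih₁ ih₂ => exact .par (ih₁ hf) (ih₂ hf)

/-- Only the variables satisfying `Q` (in practice, those free in the term being substituted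
into) need well-typed images; `u^{b/ȳ}` is not well-typed on the channel `ā`. -/
def TypedSubst (Q : Nat → Bool) (Γ Δ : List Formula) (σ : Nat → TermCL) : Prop :=
  ∀ n X, Q n = true → Γ[n]? = some X → TypingCL Δ (σ n) X

theorem TypedSubst.mono {P Q : Nat → Bool} {Γ Δ : List Formula} {σ : Nat → TermCL}
    (hσ : TypedSubst Q Γ Δ σ) (hPQ : ∀ n, P n = true → Q n = true) : TypedSubst P Γ Δ σ :=
  fun n X hn hX => hσ n X (hPQ n hn) hX

theorem TypedSubst.liftσ {Q : Nat → Bool} {Γ Δ : List Formula} {σ : Nat → TermCL}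
    (hσ : TypedSubst (fun n => Q (n + 1)) Γ Δ σ) (X : Formula) :
    TypedSubst Q (X :: Γ) (X :: Δ) (liftσ σ)
  | 0, _, _, h => .var h
  | n + 1, Y, hn, h => (hσ n Y hn h).rename (.succ Δ X)

theorem TypingCL.msubst {Γ Δ : List Formula} {t : TermCL} {A : Formula} {σ : Nat → TermCL}
    (ht : TypingCL Γ t A) (hσ : TypedSubst (freeInB · t) Γ Δ σ) :
    TypingCL Δ (t.msubst σ) A := by
  induction ht generalizing Δ σ with
  | var h => exact hσ _ _ (by simp [freeInB]) h
  | lam _ ih => exact .lam (ih (hσ.liftσ _))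
  | app _ _ ih₁ ih₂ =>
    exact .app (ih₁ (hσ.mono fun _ h => by simp [freeInB, h]))
      (ih₂ (hσ.mono fun _ h => by simp [freeInB, h]))
  | pair _ _ ih₁ ih₂ =>
    exact .pair (ih₁ (hσ.mono fun _ h => by simp [freeInB, h]))
      (ih₂ (hσ.mono fun _ h => by simp [freeInB, h]))
  | projL _ ih => exact .projL (ih hσ)
  | projR _ ih => exact .projR (ih hσ)
  | efq hP hbot _ ih => exact .efq hP hbot (ih hσ)
  | parC _ _ ih₁ ih₂ =>
    exact .parC (ih₁ ((hσ.mono fun _ h => by simp [freeInB, h]).liftσ _))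
      (ih₂ ((hσ.mono fun _ h => by simp [freeInB, h]).liftσ _))
  | par _ _ ih₁ ih₂ =>
    exact .par (ih₁ (hσ.mono fun _ h => by simp [freeInB, h]))
      (ih₂ (hσ.mono fun _ h => by simp [freeInB, h]))

def substσ (k : Nat) (s : TermCL) : Nat → TermCL := fun n =>
  if n = k then s else if k < n then .var (n - 1) else .var n

theorem liftσ_substσ (k : Nat) (s : TermCL) :
    liftσ (substσ k s) = substσ (k + 1) (s.rename Nat.succ) := by
  funext n
  cases n with
  | zero => simp [liftσ, substσ]
  | succ n =>
    simp only [liftσ, substσ]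
    split_ifs <;> first | rfl | omega | (simp only [TermCL.rename, TermCL.var.injEq]; omega)

theorem TermCL.subst_eq_msubst (t : TermCL) (k : Nat) (s : TermCL) :
    TermCL.subst k s t = t.msubst (substσ k s) := by
  induction t generalizing k s <;>
    simp_all [TermCL.subst, TermCL.msubst, substσ, liftσ_substσ]

theorem TypingCL.subst_zero {Γ : List Formula} {t s : TermCL} {A X : Formula}
    (ht : TypingCL (X :: Γ) t A) (hs : TypingCL Γ s X) : TypingCL Γ (TermCL.subst 0 s t) A := by
  rw [TermCL.subst_eq_msubst]
  refine ht.msubst fun n Y _ hY => ?_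
  cases n with
  | zero => cases hY; simpa [substσ] using hs
  | succ n =>
    have hσ : substσ 0 s (n + 1) = .var n := by simp [substσ]
    exact hσ ▸ .var hY

theorem Ctx.getElem?_ext_append_depth (C : Ctx) (X : Formula) (Δ : List Formula) :
    (C.ext ++ X :: Δ)[C.depth]? = some X := by
  simp [Ctx.depth]

theorem Ctx.exists_typing_of_typing_fill (C : Ctx) {Γ : List Formula} {t : TermCL}
    {A : Formula} (h : TypingCL Γ (C.fill t) A) : ∃ T, TypingCL (C.ext ++ Γ) t T := by
  induction C generalizing Γ A with
  | hole => exact ⟨A, h⟩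
  | lam X c ih => cases h with | lam h => simpa [Ctx.ext] using ih h
  | appL c u ih => cases h with | app h _ => exact ih h
  | appR u c ih => cases h with | app _ h => exact ih h
  | pairL c u ih => cases h with | pair h _ => exact ih h
  | pairR u c ih => cases h with | pair _ h => exact ih h
  | proj b c ih => cases h with
    | projL h => exact ih h
    | projR h => exact ih h
  | efq X c ih => cases h with | efq _ _ h => exact ih h
  | parCL X c u ih => cases h with | parC h _ => simpa [Ctx.ext] using ih h
  | parCR X u c ih => cases h with | parC _ h => simpa [Ctx.ext] using ih h
  | parL c u ih => cases h with | par h _ => exact ih h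
  | parR u c ih => cases h with | par _ h => exact ih h

theorem TypingCL.rename_fill (C : Ctx) {Γ Δ : List Formula} {f : Nat → Nat} {t t' : TermCL}
    {A : Formula} (h : TypingCL Γ (C.fill t) A) (hf : TypedRenaming Γ Δ f)
    (hrep : ∀ T, TypingCL (C.ext ++ Γ) t T → TypingCL (C.ext ++ Δ) t' T) :
    TypingCL Δ ((C.rename f).fill t') A := by
  induction C generalizing Γ Δ f A with
  | hole => exact hrep A h
  | lam X c ih => cases h with
    | lam h => exact .lam (ih h (hf.liftF X) (by simpa [Ctx.ext] using hrep))
  | appL c u ih => cases h with | app h₁ h₂ => exact .app (ih h₁ hf hrep) (h₂.rename hf)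
  | appR u c ih => cases h with | app h₁ h₂ => exact .app (h₁.rename hf) (ih h₂ hf hrep)
  | pairL c u ih => cases h with | pair h₁ h₂ => exact .pair (ih h₁ hf hrep) (h₂.rename hf)
  | pairR u c ih => cases h with | pair h₁ h₂ => exact .pair (h₁.rename hf) (ih h₂ hf hrep)
  | proj b c ih => cases h with
    | projL h => exact .projL (ih h hf hrep)
    | projR h => exact .projR (ih h hf hrep)
  | efq X c ih => cases h with | efq hP hbot h => exact .efq hP hbot (ih h hf hrep)
  | parCL X c u ih => cases h with
    | parC h₁ h₂ =>
      exact .parC (ih h₁ (hf.liftF _) (by simpa [Ctx.ext] using hrep)) (h₂.rename (hf.liftF _))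
  | parCR X u c ih => cases h with
    | parC h₁ h₂ =>
      exact .parC (h₁.rename (hf.liftF _)) (ih h₂ (hf.liftF _) (by simpa [Ctx.ext] using hrep))
  | parL c u ih => cases h with | par h₁ h₂ => exact .par (ih h₁ hf hrep) (h₂.rename hf)
  | parR u c ih => cases h with | par h₁ h₂ => exact .par (h₁.rename hf) (ih h₂ hf hrep)

theorem TypingCL.app_var_inv {Γ : List Formula} {n : Nat} {t : TermCL} {X Y T : Formula}
    (hn : Γ[n]? = some (.imp X Y)) (h : TypingCL Γ (.app (.var n) t) T) :
    T = Y ∧ TypingCL Γ t X := by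
  cases h with
  | app h₁ h₂ => cases h₁ with
    | var h₁ =>
      obtain ⟨rfl, rfl⟩ := Formula.imp.inj (Option.some.inj (hn.symm.trans h₁))
      exact ⟨rfl, h₂⟩

theorem TypingCL.tupleTerm_map_var (g : Nat → Formula) {Γ : List Formula} {l : List Nat}
    (hl : l ≠ []) (hΓ : ∀ n ∈ l, Γ[n]? = some (g n)) :
    TypingCL Γ (tupleTerm (l.map .var)) (tupleType (l.map g)) := by
  induction l with
  | nil => contradiction
  | cons a m ih =>
    cases m with
    | nil => exact .var (hΓ a (by simp))
    | cons b m =>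
      exact .pair (.var (hΓ a (by simp))) (ih (by simp) fun n hn => hΓ n (by simp [hn]))

theorem projSel_succ_succ (i len : Nat) (t : TermCL) :
    projSel (i + 1) (len + 1) t = projSel i len (.proj true t) := by
  simp [projSel, Function.iterate_succ_apply]

theorem TypingCL.projSel {Γ : List Formula} {t : TermCL} {l : List Formula} {i : Nat}
    (hi : i < l.length) (ht : TypingCL Γ t (tupleType l)) :
    TypingCL Γ (projSel i l.length t) l[i] := by
  induction l generalizing i t with
  | nil => contradiction
  | cons a m ih =>
    cases m with
    | nil =>
      obtain rfl : i = 0 := by simpa using hi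
      exact ht
    | cons b m =>
      cases i with
      | zero => simpa [_root_.projSel] using ht.projL
      | succ i => simpa [projSel_succ_succ] using ih (by simpa using hi) ht.projR

theorem typedSubst_crossσ {E Γ : List Formula} {X : Formula} {ys : List Nat} {Q : Nat → Bool}
    (hys : ∀ n < E.length, Q n = true → n ∈ ys) (hX : Q E.length = false) :
    TypedSubst Q (E ++ X :: Γ) (tupleType (ys.map fun n => E.getD n .bot) :: Γ)
      (crossσ E.length ys) := by
  intro n Y hn hY
  rcases Nat.lt_trichotomy n E.length with h | rfl | h
  · have hidx : ys.idxOf n < ys.length := List.idxOf_lt_length_iff.mpr (hys n h hn)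
    obtain rfl : E.getD n .bot = Y := by simpa [List.getElem?_append_left h, h] using hY
    have hb := (TypingCL.var (Γ := tupleType (ys.map fun n => E.getD n .bot) :: Γ) (n := 0)
      rfl).projSel (i := ys.idxOf n) (by simpa using hidx)
    rw [List.getElem_map, List.getElem_idxOf hidx, List.length_map] at hb
    simpa only [crossσ, if_pos h] using hb
  · simp [hX] at hn
  · obtain ⟨k, rfl⟩ := Nat.exists_eq_add_of_lt h
    have hk : crossσ E.length ys (E.length + k + 1) = .var (k + 1) := by
      simp only [crossσ, if_neg (by omega : ¬E.length + k + 1 < E.length)]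
      congr 1
      omega
    rw [hk]
    exact .var (by simpa [List.getElem?_append_right, Nat.add_assoc] using hY)

/-- subject reduction for the cross reduction
C[ā u] ∥ₐ D ↦ (C[b̄⟨ȳ⟩] ∥ₐ D) ∥_b D[u^{b/ȳ}/a]. -/
theorem cross_subject_reduction (Γ : List Formula) (A B : Formula)
    (C : Ctx) (u D : TermCL) (ys : List Nat)
    (hys : ys = (List.range C.depth).filter (fun n => freeInB n u))
    (hne : ys ≠ [])
    (ha : freeInB C.depth u = false)
    (ht : TypingCL Γ (.parC B (C.fill (.app (.var C.depth) u)) D) A) :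
    TypingCL Γ
      (.parC (tupleType (ys.map fun n => C.ext.getD n .bot))
        (.parC B
          ((C.rename (liftF Nat.succ)).fill
            (.app (.var (C.depth + 1)) (tupleTerm (ys.map TermCL.var))))
          (liftU1 D))
        (TermCL.subst 0 (u.msubst (crossσ C.depth ys)) (liftU1 D))) A := by
  cases ht with
  | parC hC hD =>
  have hmem (n : Nat) : n ∈ ys ↔ n < C.depth ∧ freeInB n u = true := by simp [hys]
  have hā := C.getElem?_ext_append_depth (B.imp .bot) Γ
  obtain ⟨T, hredex⟩ := C.exists_typing_of_typing_fill hC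
  have hu : TypingCL (C.ext ++ B.imp .bot :: Γ) u B := (hredex.app_var_inv hā).2
  have hD' (X : Formula) : TypingCL (B :: X :: Γ) (liftU1 D) A :=
    hD.rename ((TypedRenaming.succ Γ X).liftF B)
  refine .parC (.parC ?_ (hD' _))
    ((hD' _).subst_zero (hu.msubst (typedSubst_crossσ (fun n h hn => (hmem n).2 ⟨h, hn⟩) ha)))
  refine hC.rename_fill C ((TypedRenaming.succ _ _).liftF _) fun _ hhole => ?_
  obtain ⟨rfl, -⟩ := hhole.app_var_inv hā
  refine .app (A := tupleType (ys.map fun n => C.ext.getD n .bot)) (.var ?_)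
    (.tupleTerm_map_var _ hne fun n hn => ?_)
  · simp [Ctx.depth]
  · have h : n < C.ext.length := ((hmem n).1 hn).1
    simp [List.getElem?_append_left h, h]
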